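/- arXiv:2010.09186 — 2 statements merged into one kernel-verified Lean document; each statement's English description precedes it below -/
import Mathlib

section
/- Let n, N ≥ 1 and γ > 0. Let Λ̄ be a real symmetric positive semidefinite n×n matrix and let ℓ : ℝⁿ → ℝⁿ satisfy ⟨ℓ(p) − ℓ(q), p − q⟩ ≥ γ|p − q|² for all p, q ∈ ℝⁿ. Define B(y, p) := −Λ̄(y + p) + ℓ(p) for y, p ∈ ℝⁿ. Then for all y¹, …, yᴺ, y′¹, …, y′ᴺ ∈ ℝⁿ, writing ȳ := (1/N)∑_{j=1}^N yʲ and ȳ′ := (1/N)∑_{j=1}^N y′ʲ, one has ∑_{i=1}^N ⟨B(yⁱ, −ȳ) − B(y′ⁱ, −ȳ′), yⁱ − y′ⁱ⟩ ≤ −Nγ|ȳ − ȳ′|². -/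
open scoped RealInnerProductSpace BigOperators

theorem stmt9 (n N : ℕ) (hn : 1 ≤ n) (hN : 1 ≤ N) (γ : ℝ) (hγ : 0 < γ)
    (Λbar : Matrix (Fin n) (Fin n) ℝ) (hsym : Λbar.IsSymm)
    (hpsd : ∀ θ : EuclideanSpace ℝ (Fin n), 0 ≤ ⟪θ, Matrix.toEuclideanLin Λbar θ⟫)
    (ℓ : EuclideanSpace ℝ (Fin n) → EuclideanSpace ℝ (Fin n))
    (hℓ : ∀ p q, ⟪ℓ p - ℓ q, p - q⟫ ≥ γ * ‖p - q‖ ^ 2)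
    (B : EuclideanSpace ℝ (Fin n) → EuclideanSpace ℝ (Fin n) → EuclideanSpace ℝ (Fin n))
    (hB : ∀ y p, B y p = -(Matrix.toEuclideanLin Λbar (y + p)) + ℓ p)
    (y y' : Fin N → EuclideanSpace ℝ (Fin n)) :
    ∑ i, ⟪B (y i) (-((N : ℝ)⁻¹ • ∑ j, y j)) - B (y' i) (-((N : ℝ)⁻¹ • ∑ j, y' j)),
        y i - y' i⟫
      ≤ -((N : ℝ) * γ) * ‖(N : ℝ)⁻¹ • ∑ j, y j - (N : ℝ)⁻¹ • ∑ j, y' j‖ ^ 2 := by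
  have hN0 : (N : ℝ) ≠ 0 := Nat.cast_ne_zero.mpr (by omega)
  set L := Matrix.toEuclideanLin Λbar with hL
  set ybar : EuclideanSpace ℝ (Fin n) := (N : ℝ)⁻¹ • ∑ j, y j with hybar
  set ybar' : EuclideanSpace ℝ (Fin n) := (N : ℝ)⁻¹ • ∑ j, y' j with hybar'
  set zb : EuclideanSpace ℝ (Fin n) := ybar - ybar' with hzb
  set z : Fin N → EuclideanSpace ℝ (Fin n) := fun i => y i - y' i with hz
  set w : Fin N → EuclideanSpace ℝ (Fin n) := fun i => z i - zb with hw
  set d : EuclideanSpace ℝ (Fin n) := ℓ (-ybar) - ℓ (-ybar') with hd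
  have hsum : ∑ i, z i = (N : ℝ) • zb := by
    rw [hzb, smul_sub, hybar, hybar', smul_inv_smul₀ hN0, smul_inv_smul₀ hN0]
    simp [hz, Finset.sum_sub_distrib]
  have hwsum : ∑ i, w i = 0 := by
    rw [hw]
    rw [Finset.sum_sub_distrib, hsum, Finset.sum_const, Finset.card_univ,
      Fintype.card_fin, sub_eq_zero]
    exact Nat.cast_smul_eq_nsmul ℝ N zb
  have hvec : ∀ i, B (y i) (-ybar) - B (y' i) (-ybar') = -(L (w i)) + d := by
    intro i
    rw [hB, hB]
    have h1 : (y i + -ybar) - (y' i + -ybar') = w i := by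
      simp only [hw, hz, hzb]; abel
    rw [hd, ← h1, map_sub]
    abel
  have hterm : ∀ i, ⟪B (y i) (-ybar) - B (y' i) (-ybar'), y i - y' i⟫
      = -⟪L (w i), w i⟫ - ⟪L (w i), zb⟫ + ⟪d, z i⟫ := by
    intro i
    rw [hvec i]
    have hzi : y i - y' i = w i + zb := by simp [hw, hz]
    rw [hzi, inner_add_left, inner_add_right, inner_add_right, inner_neg_left,
      inner_neg_left]
    have hdz : (⟪d, z i⟫ : ℝ) = ⟪d, w i⟫ + ⟪d, zb⟫ := by
      rw [← inner_add_right]; simp [hw]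
    rw [hdz]; ring
  calc ∑ i, ⟪B (y i) (-ybar) - B (y' i) (-ybar'), y i - y' i⟫
      = ∑ i, (-⟪L (w i), w i⟫ - ⟪L (w i), zb⟫ + ⟪d, z i⟫) := by
        exact Finset.sum_congr rfl fun i _ => hterm i
    _ = (∑ i, -⟪L (w i), w i⟫) - ⟪L (∑ i, w i), zb⟫ + ⟪d, ∑ i, z i⟫ := by
        rw [map_sum, sum_inner, inner_sum, Finset.sum_add_distrib,
          Finset.sum_sub_distrib]
    _ = (∑ i, -⟪L (w i), w i⟫) + (N : ℝ) * ⟪d, zb⟫ := by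
        rw [hwsum, hsum, map_zero, inner_zero_left, inner_smul_right]
        ring
    _ ≤ 0 + (N : ℝ) * (-(γ * ‖zb‖ ^ 2)) := by
        gcongr
        · apply Finset.sum_nonpos
          intro i _
          simp only [neg_nonpos]
          rw [real_inner_comm]
          exact hpsd (w i)
        · have h := hℓ (-ybar) (-ybar')
          have hpq : (-ybar) - (-ybar') = -zb := by rw [hzb]; abel
          rw [hpq, norm_neg, inner_neg_right] at h
          have : ⟪d, zb⟫ ≤ -(γ * ‖zb‖ ^ 2) := by linarith [h]
          exact this
    _ = -((N : ℝ) * γ) * ‖zb‖ ^ 2 := by ring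
end

section
/- Let n, N ≥ 1, γ_f ≥ 0, L > 0, and γ_l > 0 with γ_f − L²/(4γ_l) ≥ 0. Let Λ̄ be a real symmetric positive semidefinite n×n matrix, let ℓ : ℝⁿ → ℝⁿ satisfy ⟨ℓ(p) − ℓ(q), p − q⟩ ≥ γ_l|p − q|² for all p, q, and let F̃ : ℝⁿ × ℝⁿ → ℝⁿ satisfy ⟨F̃(x, p) − F̃(x′, p), x − x′⟩ ≥ γ_f|x − x′|² and |F̃(x, p) − F̃(x, p′)| ≤ L|p − p′| for all x, x′, p, p′. Define B(y, p) := −Λ̄(y + p) + ℓ(p). Then for all x¹, …, xᴺ, x′¹, …, x′ᴺ, y¹, …, yᴺ, y′¹, …, y′ᴺ ∈ ℝⁿ, writing ȳ := (1/N)∑ⱼyʲ and ȳ′ := (1/N)∑ⱼy′ʲ, one has ∑_{i=1}^N [⟨B(yⁱ, −ȳ) − B(y′ⁱ, −ȳ′), yⁱ − y′ⁱ⟩ + ⟨−F̃(xⁱ, −ȳ) + F̃(x′ⁱ, −ȳ′), xⁱ − x′ⁱ⟩] ≤ −(γ_f − L²/(4γ_l)) ∑_{i=1}^N |xⁱ −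 x′ⁱ|². -/
open scoped RealInnerProductSpace BigOperators

private lemma cauchy_quad_sum {n N : ℕ}
    (T : EuclideanSpace ℝ (Fin n) →ₗ[ℝ] EuclideanSpace ℝ (Fin n))
    (hsymm : ∀ u v, ⟪T u, v⟫ = ⟪u, T v⟫)
    (hpsd : ∀ θ, 0 ≤ ⟪T θ, θ⟫)
    (d : Fin N → EuclideanSpace ℝ (Fin n)) :
    ⟪T (∑ i, d i), ∑ i, d i⟫ ≤ (N : ℝ) * ∑ i, ⟪T (d i), d i⟫ := by
  have expand : ⟪T (∑ i, d i), ∑ i, d i⟫ = ∑ i, ∑ j, ⟪T (d i), d j⟫ := by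
    rw [map_sum, sum_inner]
    exact Finset.sum_congr rfl fun i _ => inner_sum _ _ _
  rw [expand]
  have pair : ∀ i j, ⟪T (d i), d j⟫ ≤ (⟪T (d i), d i⟫ + ⟪T (d j), d j⟫) / 2 := by
    intro i j
    have h := hpsd (d i - d j)
    have h2 : ⟪T (d j), d i⟫ = ⟪T (d i), d j⟫ := by
      rw [hsymm, real_inner_comm]
    simp only [map_sub, inner_sub_left, inner_sub_right] at h
    linarith
  calc ∑ i, ∑ j, ⟪T (d i), d j⟫
      ≤ ∑ i : Fin N, ∑ j : Fin N, (⟪T (d i), d i⟫ + ⟪T (d j), d j⟫) / 2 :=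
        Finset.sum_le_sum fun i _ => Finset.sum_le_sum fun j _ => pair i j
    _ = (N : ℝ) * ∑ i, ⟪T (d i), d i⟫ := by
        have h1 : ∀ i : Fin N,
            ∑ j : Fin N, (⟪T (d i), d i⟫ + ⟪T (d j), d j⟫) / 2
              = ((N : ℝ) * ⟪T (d i), d i⟫ + ∑ j, ⟪T (d j), d j⟫) / 2 := by
          intro i
          rw [← Finset.sum_div, Finset.sum_add_distrib, Finset.sum_const,
            Finset.card_univ, Fintype.card_fin, nsmul_eq_mul]
        rw [Finset.sum_congr rfl fun i _ => h1 i, ← Finset.sum_div,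
          Finset.sum_add_distrib, ← Finset.mul_sum, Finset.sum_const,
          Finset.card_univ, Fintype.card_fin, nsmul_eq_mul]
        ring

theorem stmt11 (n N : ℕ) (hn : 1 ≤ n) (hN : 1 ≤ N) (γf L γl : ℝ)
    (hγf : 0 ≤ γf) (hL : 0 < L) (hγl : 0 < γl) (hkey : 0 ≤ γf - L ^ 2 / (4 * γl))
    (Λbar : Matrix (Fin n) (Fin n) ℝ) (hsym : Λbar.IsSymm)
    (hpsd : ∀ θ : EuclideanSpace ℝ (Fin n), 0 ≤ ⟪θ, Matrix.toEuclideanLin Λbar θ⟫)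
    (ℓ : EuclideanSpace ℝ (Fin n) → EuclideanSpace ℝ (Fin n))
    (hℓ : ∀ p q, ⟪ℓ p - ℓ q, p - q⟫ ≥ γl * ‖p - q‖ ^ 2)
    (F : EuclideanSpace ℝ (Fin n) → EuclideanSpace ℝ (Fin n) → EuclideanSpace ℝ (Fin n))
    (hFmono : ∀ x x' p, ⟪F x p - F x' p, x - x'⟫ ≥ γf * ‖x - x'‖ ^ 2)
    (hFlip : ∀ x p p', ‖F x p - F x p'‖ ≤ L * ‖p - p'‖)
    (B : EuclideanSpace ℝ (Fin n) → EuclideanSpace ℝ (Fin n) → EuclideanSpace ℝ (Fin n))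
    (hB : ∀ y p, B y p = -(Matrix.toEuclideanLin Λbar (y + p)) + ℓ p)
    (x x' y y' : Fin N → EuclideanSpace ℝ (Fin n)) :
    ∑ i, (⟪B (y i) (-((N : ℝ)⁻¹ • ∑ j, y j)) - B (y' i) (-((N : ℝ)⁻¹ • ∑ j, y' j)),
          y i - y' i⟫
        + ⟪-F (x i) (-((N : ℝ)⁻¹ • ∑ j, y j)) + F (x' i) (-((N : ℝ)⁻¹ • ∑ j, y' j)),
          x i - x' i⟫)
      ≤ -(γf - L ^ 2 / (4 * γl)) * ∑ i, ‖x i - x' i‖ ^ 2 := by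
  classical
  have hNpos : (0 : ℝ) < (N : ℝ) := by exact_mod_cast hN
  have hNne : (N : ℝ) ≠ 0 := ne_of_gt hNpos
  set T : EuclideanSpace ℝ (Fin n) →ₗ[ℝ] EuclideanSpace ℝ (Fin n) :=
    Matrix.toEuclideanLin Λbar with hTdef
  have hherm : Λbar.IsHermitian := by
    rwa [Matrix.IsHermitian, Matrix.conjTranspose_eq_transpose_of_trivial]
  have hTsymm : ∀ u v, ⟪T u, v⟫ = ⟪u, T v⟫ :=
    fun u v => Matrix.isHermitian_iff_isSymmetric.mp hherm u v
  have hTpsd : ∀ θ, 0 ≤ ⟪T θ, θ⟫ := by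
    intro θ
    have h := hpsd θ
    rwa [real_inner_comm] at h
  set p : EuclideanSpace ℝ (Fin n) := -((N : ℝ)⁻¹ • ∑ j, y j) with hp
  set p' : EuclideanSpace ℝ (Fin n) := -((N : ℝ)⁻¹ • ∑ j, y' j) with hp'
  set q : EuclideanSpace ℝ (Fin n) := p - p' with hq
  have hsumd : ∑ i, (y i - y' i) = -((N : ℝ) • q) := by
    have h : (N : ℝ) • q = -(∑ i, (y i - y' i)) := by
      simp only [hq, hp, hp', smul_sub, smul_neg, smul_smul,
        mul_inv_cancel₀ hNne, one_smul, Finset.sum_sub_distrib]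
      abel
    rw [h, neg_neg]
  -- Forward part
  have hS1 : ∑ i, ⟪B (y i) p - B (y' i) p', y i - y' i⟫
      ≤ -((N : ℝ) * (γl * ‖q‖ ^ 2)) := by
    have hBdiff : ∀ i, B (y i) p - B (y' i) p'
        = -(T (y i - y' i)) - T q + (ℓ p - ℓ p') := by
      intro i
      rw [hB, hB, hq]
      simp only [hTdef, map_add, map_sub]
      abel
    have hinner : ∀ i, ⟪B (y i) p - B (y' i) p', y i - y' i⟫
        = -⟪T (y i - y' i), y i - y' i⟫ - ⟪T q, y i - y' i⟫
          + ⟪ℓ p - ℓ p', y i - y' i⟫ := by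
      intro i
      rw [hBdiff i]
      simp [inner_add_left, inner_sub_left, inner_neg_left]
    have hsum1 : ∑ i, ⟪T q, y i - y' i⟫ = -((N : ℝ) * ⟪T q, q⟫) := by
      rw [← inner_sum, hsumd, inner_neg_right, real_inner_smul_right]
    have hsum2 : ∑ i, ⟪ℓ p - ℓ p', y i - y' i⟫
        = -((N : ℝ) * ⟪ℓ p - ℓ p', q⟫) := by
      rw [← inner_sum, hsumd, inner_neg_right, real_inner_smul_right]
    have hc : (N : ℝ) * ⟪T q, q⟫ ≤ ∑ i, ⟪T (y i - y' i), y i - y' i⟫ := by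
      have h := cauchy_quad_sum T hTsymm hTpsd (fun i => y i - y' i)
      rw [hsumd] at h
      rw [map_neg, map_smul, inner_neg_neg, real_inner_smul_left,
        real_inner_smul_right] at h
      have h' : (N : ℝ) * ((N : ℝ) * ⟪T q, q⟫)
          ≤ (N : ℝ) * ∑ i, ⟪T (y i - y' i), y i - y' i⟫ := h
      exact le_of_mul_le_mul_left h' hNpos
    have hl : γl * ‖q‖ ^ 2 ≤ ⟪ℓ p - ℓ p', q⟫ := by
      rw [hq]; exact hℓ p p'
    have hlN : (N : ℝ) * (γl * ‖q‖ ^ 2) ≤ (N : ℝ) * ⟪ℓ p - ℓ p', q⟫ :=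
      mul_le_mul_of_nonneg_left hl (le_of_lt hNpos)
    calc ∑ i, ⟪B (y i) p - B (y' i) p', y i - y' i⟫
        = ∑ i, (-⟪T (y i - y' i), y i - y' i⟫ - ⟪T q, y i - y' i⟫
            + ⟪ℓ p - ℓ p', y i - y' i⟫) :=
          Finset.sum_congr rfl fun i _ => hinner i
      _ = -(∑ i, ⟪T (y i - y' i), y i - y' i⟫) - ∑ i, ⟪T q, y i - y' i⟫
            + ∑ i, ⟪ℓ p - ℓ p', y i - y' i⟫ := by
          rw [Finset.sum_add_distrib, Finset.sum_sub_distrib,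
            Finset.sum_neg_distrib]
      _ = -(∑ i, ⟪T (y i - y' i), y i - y' i⟫) + (N : ℝ) * ⟪T q, q⟫
            - (N : ℝ) * ⟪ℓ p - ℓ p', q⟫ := by
          rw [hsum1, hsum2]; ring
      _ ≤ -((N : ℝ) * (γl * ‖q‖ ^ 2)) := by linarith
  -- Backward part
  have hS2i : ∀ i, ⟪-F (x i) p + F (x' i) p', x i - x' i⟫
      ≤ (L ^ 2 / (4 * γl) - γf) * ‖x i - x' i‖ ^ 2 + γl * ‖q‖ ^ 2 := by
    intro i
    have hrw : ⟪-F (x i) p + F (x' i) p', x i - x' i⟫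
        = -⟪F (x i) p - F (x' i) p, x i - x' i⟫
          - ⟪F (x' i) p - F (x' i) p', x i - x' i⟫ := by
      simp only [inner_sub_left, inner_neg_left, inner_add_left]
      ring
    have h1 := hFmono (x i) (x' i) p
    have h2 : ‖F (x' i) p - F (x' i) p'‖ ≤ L * ‖q‖ := by
      rw [hq]; exact hFlip (x' i) p p'
    have h3 : -⟪F (x' i) p - F (x' i) p', x i - x' i⟫
        ≤ L * ‖q‖ * ‖x i - x' i‖ := by
      have ha := abs_real_inner_le_norm (F (x' i) p - F (x' i) p') (x i - x' i)
      have hb : ‖F (x' i) p - F (x' i) p'‖ * ‖x i - x' i‖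
          ≤ L * ‖q‖ * ‖x i - x' i‖ :=
        mul_le_mul_of_nonneg_right h2 (norm_nonneg _)
      have hna := neg_abs_le (⟪F (x' i) p - F (x' i) p', x i - x' i⟫ : ℝ)
      linarith [abs_nonneg (⟪F (x' i) p - F (x' i) p', x i - x' i⟫ : ℝ)]
    have amgm : L * ‖q‖ * ‖x i - x' i‖
        ≤ L ^ 2 / (4 * γl) * ‖x i - x' i‖ ^ 2 + γl * ‖q‖ ^ 2 := by
      have hkey2 : L ^ 2 / (4 * γl) * ‖x i - x' i‖ ^ 2 + γl * ‖q‖ ^ 2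
          - L * ‖q‖ * ‖x i - x' i‖
          = (L * ‖x i - x' i‖ - 2 * γl * ‖q‖) ^ 2 / (4 * γl) := by
        field_simp
        ring
      have hnn : 0 ≤ (L * ‖x i - x' i‖ - 2 * γl * ‖q‖) ^ 2 / (4 * γl) :=
        div_nonneg (sq_nonneg _) (by linarith)
      linarith [hkey2 ▸ hnn]
    rw [hrw]
    nlinarith [h1, h3, amgm]
  have hS2 : ∑ i, ⟪-F (x i) p + F (x' i) p', x i - x' i⟫
      ≤ (L ^ 2 / (4 * γl) - γf) * (∑ i, ‖x i - x' i‖ ^ 2)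
        + (N : ℝ) * (γl * ‖q‖ ^ 2) := by
    calc ∑ i, ⟪-F (x i) p + F (x' i) p', x i - x' i⟫
        ≤ ∑ i, ((L ^ 2 / (4 * γl) - γf) * ‖x i - x' i‖ ^ 2 + γl * ‖q‖ ^ 2) :=
          Finset.sum_le_sum fun i _ => hS2i i
      _ = (L ^ 2 / (4 * γl) - γf) * (∑ i, ‖x i - x' i‖ ^ 2)
            + (N : ℝ) * (γl * ‖q‖ ^ 2) := by
          rw [Finset.sum_add_distrib, ← Finset.mul_sum, Finset.sum_const,
            Finset.card_univ, Fintype.card_fin, nsmul_eq_mul]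
  calc ∑ i, (⟪B (y i) p - B (y' i) p', y i - y' i⟫
        + ⟪-F (x i) p + F (x' i) p', x i - x' i⟫)
      = (∑ i, ⟪B (y i) p - B (y' i) p', y i - y' i⟫)
        + ∑ i, ⟪-F (x i) p + F (x' i) p', x i - x' i⟫ :=
        Finset.sum_add_distrib
    _ ≤ -((N : ℝ) * (γl * ‖q‖ ^ 2))
        + ((L ^ 2 / (4 * γl) - γf) * (∑ i, ‖x i - x' i‖ ^ 2)
          + (N : ℝ) * (γl * ‖q‖ ^ 2)) := add_le_add hS1 hS2
    _ = -(γf - L ^ 2 / (4 * γl)) * ∑ i, ‖x i - x' i‖ ^ 2 := by ring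
end
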